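/- Let (X, 𝒜_X) be an Azumaya variety over an algebraically closed field k, with Čech 2-cocycle α_X representing [𝒜_X] and locally free α_X-twisted sheaf ℰ_X of rank r with 𝒜_X ≅ ℰ_X ⊗_{O_X} ℰ_X^∨. Then for any closed point x ∈ X, the skyscraper sheaf k(x) canonically inherits from ℰ_X the structure of an α_X-twisted sheaf: the collection ({k(x)}, {(det φ_{ij,x})^{1/r}}), where φ_{ij} are the gluing isomorphisms of ℰ_X and φ_{ij,x} their induced maps on stalks at x, is well defined and is an α_X-twisted sheaf on X. -/

import Mathlib

/-!
Common framework for formalizing statements about Azumaya varieties, twisted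
sheaves and their derived categories.  Notions which are not yet available in
Mathlib (categories of (twisted) coherent sheaves, bounded derived categories of
such, Fourier–Mukai transforms, ...) are recorded as *data*, together with those
of their properties which are used in the statements.
-/

noncomputable section

open CategoryTheory CategoryTheory.Limits CategoryTheory.Pretriangulated AlgebraicGeometry

universe u

namespace AzumayaPaper

/-- The canonical `R`-linear map `A ⊗[R] Aᵐᵒᵖ →ₗ[R] End_R(A)`,
`a ⊗ b ↦ (x ↦ a * x * b.unop)`. -/
def mulLeftRight (R A : Type u) [CommRing R] [Ring A] [Algebra R A] :
    TensorProduct R A Aᵐᵒᵖ →ₗ[R] Module.End R A :=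
  TensorProduct.lift
    (LinearMap.mk₂ R
      (fun a b => (LinearMap.mulRight R b.unop).comp (LinearMap.mulLeft R a))
      (fun a a' b => by ext x; simp [add_mul])
      (fun r a b => by ext x; simp [smul_mul_assoc])
      (fun a b b' => by ext x; simp [mul_add])
      (fun r a b => by ext x; simp [mul_smul_comm]))

/-- An `R`-algebra `A` is Azumaya if it is a finitely generated projective faithful
`R`-module and the canonical map `A ⊗[R] Aᵐᵒᵖ → End_R(A)` is bijective. -/
def IsAzumayaAlgebra (R A : Type u) [CommRing R] [Ring A] [Algebra R A] : Prop :=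
  Module.Finite R A ∧ Module.Projective R A ∧ FaithfulSMul R A ∧
    Function.Bijective (mulLeftRight R A)

/-- A morphism of schemes is flat if all the induced maps on stalks are flat. -/
def FlatMorphism {X Y : Scheme.{u}} (f : X ⟶ Y) : Prop :=
  ∀ x : X, RingHom.Flat (f.stalkMap x).hom

/-- A scheme is regular if all of its stalks are regular local rings (Noetherian
local rings whose cotangent space has dimension equal to the Krull dimension). -/
def RegularScheme (X : Scheme.{u}) : Prop :=
  ∀ x : X, IsNoetherianRing (X.presheaf.stalk x) ∧
    (Module.finrank (IsLocalRing.ResidueField (X.presheaf.stalk x))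
        (IsLocalRing.CotangentSpace (X.presheaf.stalk x)) : WithBot (WithTop ℕ)) =
      ringKrullDim (X.presheaf.stalk x)

/-- An Azumaya variety over a field `k`: an algebraic variety `X` over `k` equipped
with a sheaf `𝒜` of Azumaya `O_X`-algebras. -/
structure AzumayaVariety (k : Type u) [Field k] where
  /-- the underlying algebraic variety -/
  X : Scheme.{u}
  /-- the structure morphism to `Spec k` -/
  toBase : X ⟶ Spec (CommRingCat.of k)
  /-- a variety is (locally) of finite type over `k` -/
  locallyOfFiniteType : LocallyOfFiniteType toBase
  /-- the sheaf of Azumaya algebras, as a sheaf of (not necessarily commutative) rings -/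
  𝒜 : TopCat.Sheaf RingCat X.carrier
  /-- the `O_X`-algebra structure on `𝒜` -/
  algebraStr : X.presheaf ⋙ forget₂ CommRingCat RingCat ⟶ 𝒜.val
  /-- the induced algebra structure on the stalks of `𝒜` -/
  stalkAlgebra : ∀ x : X, Algebra (X.presheaf.stalk x) (TopCat.Presheaf.stalk (C := RingCat) 𝒜.val x)
  /-- `𝒜` is a sheaf of Azumaya algebras: every stalk is an Azumaya algebra over the
  corresponding local ring -/
  isAzumaya : ∀ x : X,
    letI := stalkAlgebra x
    IsAzumayaAlgebra (X.presheaf.stalk x) (TopCat.Presheaf.stalk (C := RingCat) 𝒜.val x)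

variable {k : Type u} [Field k]

/-- A morphism of Azumaya varieties `(X, 𝒜_X) ⟶ (Y, 𝒜_Y)`: a morphism `f : X ⟶ Y`
of varieties over `k` together with a homomorphism `f^* 𝒜_Y ⟶ 𝒜_X` of `O_X`-algebras,
recorded in adjoint form as a morphism `𝒜_Y ⟶ f_* 𝒜_X` of sheaves of rings. -/
structure AzumayaHom (V W : AzumayaVariety k) where
  /-- the underlying morphism of varieties -/
  f : V.X ⟶ W.X
  /-- compatibility with the structure morphisms -/
  over' : f ≫ W.toBase = V.toBase
  /-- the algebra component `f_𝒜 : f^* 𝒜_W → 𝒜_V`, in adjoint form -/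
  algHom : W.𝒜.val ⟶ f.base _* V.𝒜.val

/-- A morphism of Azumaya varieties is flat if the underlying morphism of schemes is. -/
def AzumayaHom.Flat {V W : AzumayaVariety k} (π : AzumayaHom V W) : Prop :=
  FlatMorphism π.f

/-- A morphism of Azumaya varieties is proper if the underlying morphism of schemes is. -/
def AzumayaHom.Proper {V W : AzumayaVariety k} (π : AzumayaHom V W) : Prop :=
  IsProper π.f

/-- A morphism of Azumaya varieties is smooth if the underlying morphism of schemes is. -/
def AzumayaHom.Smooth {V W : AzumayaVariety k} (π : AzumayaHom V W) : Prop :=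
  IsSmooth π.f

/-- The data of an `R`-linear triangulated category (such as the bounded derived
category of (twisted) coherent sheaves on an Azumaya variety). -/
structure TriangulatedData (R : Type u) [CommRing R] where
  /-- the underlying category -/
  C : Type u
  [cat : Category.{u} C]
  [preadd : Preadditive C]
  [lin : Linear R C]
  [zero : HasZeroObject C]
  [shift : HasShift C ℤ]
  [shiftAdd : ∀ n : ℤ, (shiftFunctor C n).Additive]
  [pretri : Pretriangulated C]

attribute [instance] TriangulatedData.cat TriangulatedData.preadd TriangulatedData.lin
  TriangulatedData.zero TriangulatedData.shift TriangulatedData.shiftAdd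
  TriangulatedData.pretri

/-- The data of an abelian category of coherent (twisted) sheaves together with its
bounded derived category and the inclusion of the heart. -/
structure SheafTheory (R : Type u) [CommRing R] extends TriangulatedData R where
  /-- the abelian category of coherent (twisted) sheaves -/
  Coh : Type u
  [cohCat : Category.{u} Coh]
  [cohAb : Abelian Coh]
  [cohLin : Linear R Coh]
  /-- the inclusion of `coh` as the heart of the bounded derived category -/
  ι : Coh ⥤ C
  [ιFull : ι.Full]
  [ιFaithful : ι.Faithful]
  [ιAdditive : ι.Additive]

attribute [instance] SheafTheory.cohCat SheafTheory.cohAb SheafTheory.cohLin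
  SheafTheory.ιFull SheafTheory.ιFaithful SheafTheory.ιAdditive

section

variable (R : Type u) [CommRing R]

/-- An exact (i.e. triangulated) `R`-linear equivalence between triangulated categories. -/
structure ExactLinearEquivalence (T T' : TriangulatedData R) where
  /-- the underlying equivalence of categories -/
  equiv : T.C ≌ T'.C
  [additive : equiv.functor.Additive]
  [linear : equiv.functor.Linear R]
  [commShift : equiv.functor.CommShift ℤ]
  [triangulated : equiv.functor.IsTriangulated]

/-- Two triangulated categories are derived-equivalent when there is an exact
`R`-linear equivalence between them. -/
def DerivedEquivalent (T T' : TriangulatedData R) : Prop :=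
  Nonempty (ExactLinearEquivalence R T T')

/-- A functor between triangulated categories is an exact `R`-linear equivalence. -/
def IsExactLinearEquivalence {T T' : TriangulatedData R} (F : T.C ⥤ T'.C) : Prop :=
  F.IsEquivalence ∧ ∃ (hadd : F.Additive) (hcs : F.CommShift ℤ),
    (letI := hadd; F.Linear R) ∧ (letI := hcs; F.IsTriangulated)

/-- A functor between `R`-linear additive categories is an `R`-linear equivalence. -/
def IsLinearEquivalenceFunctor {C D : Type u} [Category.{u} C] [Category.{u} D]
    [Preadditive C] [Preadditive D] [Linear R C] [Linear R D] (F : C ⥤ D) : Prop :=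
  F.IsEquivalence ∧ ∃ hadd : F.Additive, letI := hadd; F.Linear R

end


/-- **Twisted structure on skyscraper sheaves** (Lemma `lem:canonical`).
Let `(X, 𝒜_X)` be an Azumaya variety over an algebraically closed field `k`, with
Čech 2-cocycle `α_X` representing `[𝒜_X]` and locally free `α_X`-twisted sheaf
`ℰ_X` of rank `r` with `𝒜_X ≅ ℰ_X ⊗ ℰ_X^∨`.  At a closed point `x ∈ X`, the gluing
isomorphisms of `ℰ_X` induce on stalks invertible `r × r` matrices `φ i j` over
`k ≅ k(x)` satisfying `φ i i = 1`, `φ j i = (φ i j)⁻¹` and the `α_X`-twisted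
cocycle condition `φ i j * φ j l * φ l i = α i j l • 1`, where `α i j l ∈ kˣ` are
the stalk values of the cocycle.  Then the skyscraper sheaf `k(x)` canonically
inherits an `α_X`-twisted structure: the collection `(k(x), (det φ i j)^{1/r})` is
well defined, i.e. there are scalars `c i j ∈ kˣ` with `(c i j)^r = det (φ i j)`
forming an `α_X`-twisted gluing datum for the one-dimensional stalks. -/
theorem skyscraper_inherits_twisted_structure
    {k : Type u} [Field k] [IsAlgClosed k]
    (V : AzumayaVariety k)
    (x : V.X) (hx : IsClosed ({x} : Set V.X))
    -- the indices of the étale cover trivializing ℰ_X around x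
    (I : Type u)
    -- the rank of ℰ_X
    (r : ℕ) (hr : 0 < r)
    -- the stalk values at x of the Čech 2-cocycle α_X
    (α : I → I → I → kˣ)
    -- the stalkwise gluing isomorphisms of ℰ_X at x, as invertible r × r matrices
    (φ : I → I → (Matrix (Fin r) (Fin r) k)ˣ)
    (hid : ∀ i, φ i i = 1)
    (hinv : ∀ i j, φ j i = (φ i j)⁻¹)
    (hcoc : ∀ i j l, ((φ i j * φ j l * φ l i : (Matrix (Fin r) (Fin r) k)ˣ) :
        Matrix (Fin r) (Fin r) k) = (α i j l : k) • (1 : Matrix (Fin r) (Fin r) k)) :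
    ∃ c : I → I → kˣ,
      (∀ i j, ((c i j : k)) ^ r = Matrix.det ((φ i j : Matrix (Fin r) (Fin r) k))) ∧
      (∀ i, c i i = 1) ∧
      (∀ i j, c j i = (c i j)⁻¹) ∧
      (∀ i j l, c i j * c j l * c l i = α i j l) := by
  rcases isEmpty_or_nonempty I with hI | hI
  · exact ⟨fun _ _ => 1, fun i => hI.elim i, fun i => hI.elim i,
      fun i _ => hI.elim i, fun i _ _ => hI.elim i⟩
  obtain ⟨o⟩ := hI
  set A : I → I → Matrix (Fin r) (Fin r) k := fun i j => (φ i j : Matrix (Fin r) (Fin r) k)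
    with hA
  have hA1 : ∀ i, A i i = 1 := fun i => by simp [hA, hid i]
  have hAinv : ∀ i j, A i j * A j i = 1 := by
    intro i j
    have : ((φ i j * φ j i : (Matrix (Fin r) (Fin r) k)ˣ) : Matrix (Fin r) (Fin r) k)
        = A i j * A j i := by simp [hA]
    rw [← this, hinv i j]
    simp
  have hcancel : ∀ (i j : I) (s t : k), s • A i j = t • A i j → s = t := by
    intro i j s t h
    have h2 : s • (A i j * A j i) = t • (A i j * A j i) := by
      rw [← smul_mul_assoc, ← smul_mul_assoc, h]
    rw [hAinv] at h2
    have h3 := congrFun (congrFun h2 ⟨0, hr⟩) ⟨0, hr⟩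
    simpa [Matrix.one_apply] using h3
  have hkey : ∀ i j l, A i j * A j l = (α i j l : k) • A i l := by
    intro i j l
    have h : A i j * A j l * A l i = (α i j l : k) • 1 := by
      simpa [hA, Units.val_mul] using hcoc i j l
    calc A i j * A j l = A i j * A j l * (A l i * A i l) := by rw [hAinv, mul_one]
      _ = (A i j * A j l * A l i) * A i l := by simp only [mul_assoc]
      _ = ((α i j l : k) • 1) * A i l := by rw [h]
      _ = (α i j l : k) • A i l := by rw [smul_mul_assoc, one_mul]
  -- α i j i = 1
  have h1 : ∀ i j, (α i j i : k) = 1 := by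
    intro i j
    have h := hkey i j i
    rw [hAinv, hA1] at h
    exact (hcancel i i _ 1 (by rw [hA1, one_smul]; exact h.symm))
  -- α i i j = 1
  have h2 : ∀ i j, (α i i j : k) = 1 := by
    intro i j
    have h := hkey i i j
    rw [hA1, one_mul] at h
    exact (hcancel i j 1 _ (by rw [one_smul]; exact h)).symm
  -- associativity relation
  have hstar : ∀ i j l, (α j l o : k) * α i j o = (α i j l : k) * α i l o := by
    intro i j l
    have e1 : A i j * (A j l * A l o) = ((α j l o : k) * (α i j o : k)) • A i o := by
      rw [hkey j l o, mul_smul_comm, hkey i j o, smul_smul]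
    have e2 : (A i j * A j l) * A l o = ((α i j l : k) * (α i l o : k)) • A i o := by
      rw [hkey i j l, smul_mul_assoc, hkey i l o, smul_smul]
    exact hcancel i o _ _ (by rw [← e1, ← e2, mul_assoc])
  -- swapping the last two indices inverts
  have hswap : ∀ i l, (α l i o : k) * α i l o = 1 := by
    intro i l
    have h := hstar l i l
    rw [h1 l i, h2 l o, one_mul] at h
    rw [mul_comm]; exact h
  -- choose r-th roots of det (A i o)
  have hdet : ∀ i j, Matrix.det (A i j) ≠ 0 := by
    intro i j
    have : IsUnit (A i j) := ⟨φ i j, rfl⟩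
    exact ((Matrix.isUnit_iff_isUnit_det _).mp this).ne_zero
  have hroot : ∀ i, ∃ z : k, z ^ r = Matrix.det (A i o) :=
    fun i => IsAlgClosed.exists_pow_nat_eq _ hr
  choose e he using hroot
  have hene : ∀ i, e i ≠ 0 := by
    intro i h
    apply hdet i o
    rw [← he i, h, zero_pow hr.ne']
  -- the determinant relation
  have hdetrel : ∀ i j, Matrix.det (A i j) * Matrix.det (A j o)
      = (α i j o : k) ^ r * Matrix.det (A i o) := by
    intro i j
    have := congrArg Matrix.det (hkey i j o)
    rwa [Matrix.det_mul, Matrix.det_smul, Fintype.card_fin] at this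
  -- define c
  have hcycle : ∀ i j l, (α i j o : k) * α j l o * α l i o = (α i j l : k) := by
    intro i j l
    linear_combination (α l i o : k) * hstar i j l + (α i j l : k) * hswap i l
  refine ⟨fun i j => (α i j o) * Units.mk0 (e i) (hene i) * (Units.mk0 (e j) (hene j))⁻¹,
    ?_, ?_, ?_, ?_⟩
  · intro i j
    have hjo := hdet j o
    have key := hdetrel i j
    simp only [hA] at key hjo
    simp only [Units.val_mul, Units.val_inv_eq_inv_val, Units.val_mk0]
    rw [mul_pow, mul_pow, inv_pow, he i, he j]
    simp only [hA] at *
    field_simp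
    linear_combination -key
  · intro i
    ext
    simp only [Units.val_mul, Units.val_inv_eq_inv_val, Units.val_mk0, Units.val_one]
    rw [h2 i o, one_mul]
    exact mul_inv_cancel₀ (hene i)
  · intro i j
    ext
    simp only [Units.val_mul, Units.val_inv_eq_inv_val, Units.val_mk0, Units.val_one]
    have hs := hswap i j
    have hij : (α i j o : k) ≠ 0 := (α i j o).ne_zero
    field_simp [hene i, hene j, hij]
    linear_combination hs
  · intro i j l
    ext
    simp only [Units.val_mul, Units.val_inv_eq_inv_val, Units.val_mk0]
    have key := hcycle i j l
    field_simp [hene i, hene j, hene l]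
    linear_combination key
end AzumayaPaper
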